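/- arXiv:2203.01794 — 4 statements merged into one kernel-verified Lean document; each statement's English description precedes it below -/
import Mathlib

section
/- Let S ⊆ ℝ² be a finite nonempty set and let a, b ∈ ℝ² with y_a = y_b and x_a ≤ x_b (a horizontal segment with left endpoint a and right endpoint b). Then the directed Hausdorff distance from S to the segment [a, b] satisfies D⃗_H(S, [a, b]) = max{ h_{←S}(a), h_{→S}(b) }. -/
open Metric Set

noncomputable section

/-- Points of the Euclidean plane ℝ². -/
abbrev Pt : Type := EuclideanSpace ℝ (Fin 2)

/-- The point (x, y) ∈ ℝ². -/
def pt (x y : ℝ) : Pt := (WithLp.equiv 2 (Fin 2 → ℝ)).symm ![x, y]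

/-- The leftward horizontal halfline ←p = {(x, y_p) : x ≤ x_p}. -/
def leftRay (p : Pt) : Set Pt := {z : Pt | z 1 = p 1 ∧ z 0 ≤ p 0}

/-- The rightward horizontal halfline →p = {(x, y_p) : x ≥ x_p}. -/
def rightRay (p : Pt) : Set Pt := {z : Pt | z 1 = p 1 ∧ p 0 ≤ z 0}

/-- h_{←p}(q): Euclidean distance from q to the leftward halfline at p. -/
def hL (p q : Pt) : ℝ := infDist q (leftRay p)

/-- h_{→p}(q): Euclidean distance from q to the rightward halfline at p. -/
def hR (p q : Pt) : ℝ := infDist q (rightRay p)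

/-- h_{←S}(q) = max_{p ∈ S} h_{←p}(q). -/
def hLS (S : Finset Pt) (hS : S.Nonempty) (q : Pt) : ℝ := S.sup' hS fun p => hL p q

/-- h_{→S}(q) = max_{p ∈ S} h_{→p}(q). -/
def hRS (S : Finset Pt) (hS : S.Nonempty) (q : Pt) : ℝ := S.sup' hS fun p => hR p q

/-- δ_{pq}(y) = inf_x max{‖(x,y) − p‖, ‖(x,y) − q‖}. -/
def delta (p q : Pt) (y : ℝ) : ℝ := ⨅ x : ℝ, max ‖pt x y - p‖ ‖pt x y - q‖

/-- δ'_{pq}(y) = inf_x max{h_{←q}((x,y)), h_{→p}((x,y))}. -/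
def delta' (p q : Pt) (y : ℝ) : ℝ := ⨅ x : ℝ, max (hL q (pt x y)) (hR p (pt x y))


lemma pt_apply0 (x y : ℝ) : pt x y 0 = x := rfl
lemma pt_apply1 (x y : ℝ) : pt x y 1 = y := rfl

lemma dist_formula (u v : Pt) : dist u v = Real.sqrt ((u 0 - v 0)^2 + (u 1 - v 1)^2) := by
  rw [EuclideanSpace.dist_eq]
  simp [Fin.sum_univ_two, Real.dist_eq, sq_abs]

lemma key (q : Pt) (c : ℝ) (I : Set ℝ) (x₀ : ℝ) (hx₀ : x₀ ∈ I)
    (hmin : ∀ x ∈ I, (q 0 - x₀)^2 ≤ (q 0 - x)^2) :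
    infDist q {z : Pt | z 1 = c ∧ z 0 ∈ I} = dist q (pt x₀ c) := by
  apply le_antisymm
  · exact infDist_le_dist_of_mem ⟨pt_apply1 x₀ c, hx₀⟩
  · by_contra h
    push_neg at h
    obtain ⟨z, hz, hzd⟩ := (infDist_lt_iff (⟨pt x₀ c, pt_apply1 x₀ c, hx₀⟩ : Set.Nonempty {z : Pt | z 1 = c ∧ z 0 ∈ I})).1 h
    have : dist q (pt x₀ c) ≤ dist q z := by
      rw [dist_formula, dist_formula, pt_apply0, pt_apply1, hz.1]
      exact Real.sqrt_le_sqrt (by linarith [hmin (z 0) hz.2])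
    linarith

lemma segment_char (a b : Pt) (hy : a 1 = b 1) (hx : a 0 ≤ b 0) :
    segment ℝ a b = {z : Pt | z 1 = a 1 ∧ z 0 ∈ Icc (a 0) (b 0)} := by
  rw [segment_eq_image']
  ext z
  simp only [mem_image, mem_setOf_eq, mem_Icc]
  constructor
  · rintro ⟨t, ⟨ht0, ht1⟩, rfl⟩
    have h0 : (a + t • (b - a)) 0 = a 0 + t * (b 0 - a 0) := rfl
    have h1 : (a + t • (b - a)) 1 = a 1 + t * (b 1 - a 1) := rfl
    rw [h0, h1, ← hy]
    refine ⟨by ring, by nlinarith, by nlinarith⟩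
  · rintro ⟨h1, h0a, h0b⟩
    rcases eq_or_lt_of_le hx with he | hlt
    · refine ⟨0, ⟨le_refl 0, zero_le_one⟩, ?_⟩
      have hz0 : z 0 = a 0 := le_antisymm (he ▸ h0b) h0a
      ext i
      fin_cases i
      · simpa using hz0.symm
      · simpa using h1.symm
    · refine ⟨(z 0 - a 0) / (b 0 - a 0), ⟨div_nonneg (by linarith) (by linarith), ?_⟩, ?_⟩
      · rw [div_le_one (by linarith)]; linarith
      · ext i
        fin_cases i
        · show a 0 + (z 0 - a 0) / (b 0 - a 0) * (b 0 - a 0) = z 0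
          rw [div_mul_cancel₀ _ (by linarith : b 0 - a 0 ≠ 0)]; ring
        · show a 1 + (z 0 - a 0) / (b 0 - a 0) * (b 1 - a 1) = z 1
          rw [← hy, h1]; ring

lemma hL_eq (p q : Pt) : hL p q = dist q (pt (min (q 0) (p 0)) (p 1)) := by
  refine key q (p 1) (Iic (p 0)) (min (q 0) (p 0)) (mem_Iic.2 (min_le_right _ _)) ?_
  intro x hx
  rcases le_total (q 0) (p 0) with h | h
  · rw [min_eq_left h]; nlinarith
  · rw [min_eq_right h]; simp only [mem_Iic] at hx; nlinarith

lemma hR_eq (p q : Pt) : hR p q = dist q (pt (max (q 0) (p 0)) (p 1)) := by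
  refine key q (p 1) (Ici (p 0)) (max (q 0) (p 0)) (mem_Ici.2 (le_max_right _ _)) ?_
  intro x hx
  rcases le_total (q 0) (p 0) with h | h
  · rw [max_eq_right h]; simp only [mem_Ici] at hx; nlinarith
  · rw [max_eq_left h]; nlinarith

lemma pointwise (a b s : Pt) (hy : a 1 = b 1) (hx : a 0 ≤ b 0) :
    infDist s (segment ℝ a b) = max (hL s a) (hR s b) := by
  set m : ℝ := max (a 0) (min (s 0) (b 0)) with hm
  have hmem : m ∈ Icc (a 0) (b 0) := ⟨le_max_left _ _, max_le hx (min_le_right _ _)⟩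
  have hmin : ∀ x ∈ Icc (a 0) (b 0), (s 0 - m)^2 ≤ (s 0 - x)^2 := by
    intro x hxx
    simp only [mem_Icc] at hxx
    rcases le_total (s 0) (a 0) with h1 | h1
    · have : m = a 0 := by rw [hm, min_eq_left (le_trans h1 hx), max_eq_left h1]
      rw [this]; nlinarith
    · rcases le_total (s 0) (b 0) with h2 | h2
      · have : m = s 0 := by rw [hm, min_eq_left h2, max_eq_right h1]
        rw [this]; nlinarith
      · have : m = b 0 := by rw [hm, min_eq_right h2, max_eq_right hx]
        rw [this]; nlinarith
  rw [segment_char a b hy hx, key s (a 1) (Icc (a 0) (b 0)) m hmem hmin, hL_eq, hR_eq,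
    dist_formula, dist_formula, dist_formula, pt_apply0, pt_apply1, pt_apply0, pt_apply1,
    pt_apply0, pt_apply1, ← hy]
  rcases le_total (s 0) (a 0) with h1 | h1
  · have hm' : m = a 0 := by rw [hm, min_eq_left (le_trans h1 hx), max_eq_left h1]
    rw [hm', min_eq_right h1, max_eq_left (le_trans h1 hx), max_eq_left
      (Real.sqrt_le_sqrt (by nlinarith))]
    congr 1; ring
  · rcases le_total (s 0) (b 0) with h2 | h2
    · have hm' : m = s 0 := by rw [hm, min_eq_left h2, max_eq_right h1]
      rw [hm', min_eq_left h1, max_eq_left h2]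
      simp only [sub_self]
      rw [max_self]
      congr 1; ring
    · have hm' : m = b 0 := by rw [hm, min_eq_right h2, max_eq_right hx]
      rw [hm', min_eq_left h1, max_eq_right h2, max_eq_right
        (Real.sqrt_le_sqrt (by nlinarith))]
      congr 1; ring


theorem stmt_2 (S : Finset Pt) (hS : S.Nonempty) (a b : Pt)
    (hy : a 1 = b 1) (hx : a 0 ≤ b 0) :
    S.sup' hS (fun s => infDist s (segment ℝ a b)) = max (hLS S hS a) (hRS S hS b) := by
  have hpt : ∀ s ∈ S, infDist s (segment ℝ a b) = max (hL s a) (hR s b) :=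
    fun s _ => pointwise a b s hy hx
  rw [Finset.sup'_congr hS rfl hpt]
  apply le_antisymm
  · exact Finset.sup'_le _ _ fun s hs =>
      max_le_max (Finset.le_sup' (fun p => hL p a) hs) (Finset.le_sup' (fun p => hR p b) hs)
  · refine max_le (Finset.sup'_le _ _ fun s hs => ?_) (Finset.sup'_le _ _ fun s hs => ?_)
    · exact le_trans (le_max_left (hL s a) (hR s b))
        (Finset.le_sup' (fun s => max (hL s a) (hR s b)) hs)
    · exact le_trans (le_max_right (hL s a) (hR s b))
        (Finset.le_sup' (fun s => max (hL s a) (hR s b)) hs)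
end
end

section
/- Let p, q ∈ ℝ² with x_q ≤ x_p, and let y ∈ ℝ. The function x ↦ max{‖(x, y) − p‖, ‖(x, y) − q‖} attains its global infimum over ℝ at some x* ∈ [x_q, x_p]; in particular, inf_{x ∈ ℝ} max{‖(x, y) − p‖, ‖(x, y) − q‖} = inf_{x ∈ [x_q, x_p]} max{‖(x, y) − p‖, ‖(x, y) − q‖}. -/
/-! Clamping `x` to `[x_q, x_p]` moves it horizontally closer to both `p` and `q`, so it decreases
both distances; a minimiser of the continuous function on the compact interval is therefore a
global minimiser. -/

open Metric Set

noncomputable section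

lemma norm_pt_sub (x y : ℝ) (p : Pt) :
    ‖pt x y - p‖ = √((x - p 0) ^ 2 + (y - p 1) ^ 2) := by
  simp [EuclideanSpace.norm_eq, pt, Fin.sum_univ_two, sq_abs]

lemma continuous_norm_pt_sub (y : ℝ) (p : Pt) : Continuous fun x => ‖pt x y - p‖ := by
  simp only [norm_pt_sub]
  fun_prop

lemma norm_pt_sub_le_of_abs_sub_le {a b y : ℝ} {p : Pt} (hab : |a - p 0| ≤ |b - p 0|) :
    ‖pt a y - p‖ ≤ ‖pt b y - p‖ := by
  rw [norm_pt_sub, norm_pt_sub]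
  gcongr √(?_ + _)
  exact sq_le_sq.2 hab

lemma abs_projIcc_sub_le {a b c : ℝ} (hab : a ≤ b) (hc : c ∈ Icc a b) (x : ℝ) :
    |(projIcc a b hab x : ℝ) - c| ≤ |x - c| := by
  simpa [projIcc_of_mem hab hc] using abs_projIcc_sub_projIcc hab (c := x) (d := c)

lemma norm_pt_projIcc_sub_le {a b : ℝ} (hab : a ≤ b) {p : Pt} (hp : p 0 ∈ Icc a b) (x y : ℝ) :
    ‖pt (projIcc a b hab x) y - p‖ ≤ ‖pt x y - p‖ :=
  norm_pt_sub_le_of_abs_sub_le (abs_projIcc_sub_le hab hp x)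

lemma exists_forall_le_of_projIcc_le {α β : Type*} [ConditionallyCompleteLinearOrder α]
    [TopologicalSpace α] [OrderTopology α] [LinearOrder β] [TopologicalSpace β]
    [OrderClosedTopology β] {f : α → β} {a b : α} (hab : a ≤ b) (hf : ContinuousOn f (Icc a b))
    (hproj : ∀ x, f (projIcc a b hab x) ≤ f x) :
    ∃ xs ∈ Icc a b, ∀ x, f xs ≤ f x := by
  obtain ⟨xs, hxs, hmin⟩ := isCompact_Icc.exists_isMinOn (nonempty_Icc.2 hab) hf
  exact ⟨xs, hxs, fun x => (hmin (projIcc a b hab x).2).trans (hproj x)⟩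

theorem stmt_5 (p q : Pt) (h : q 0 ≤ p 0) (y : ℝ) :
    (∃ xs : ℝ, xs ∈ Set.Icc (q 0) (p 0) ∧
      ∀ x : ℝ, max ‖pt xs y - p‖ ‖pt xs y - q‖ ≤ max ‖pt x y - p‖ ‖pt x y - q‖) ∧
    (⨅ x : ℝ, max ‖pt x y - p‖ ‖pt x y - q‖) =
      ⨅ x : Set.Icc (q 0) (p 0), max ‖pt x.1 y - p‖ ‖pt x.1 y - q‖ := by
  set f : ℝ → ℝ := fun x => max ‖pt x y - p‖ ‖pt x y - q‖
  have hproj (x : ℝ) : f (projIcc (q 0) (p 0) h x) ≤ f x :=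
    max_le_max (norm_pt_projIcc_sub_le h (right_mem_Icc.2 h) x y)
      (norm_pt_projIcc_sub_le h (left_mem_Icc.2 h) x y)
  have hf : Continuous f := (continuous_norm_pt_sub y p).max (continuous_norm_pt_sub y q)
  obtain ⟨xs, hxs, hmin⟩ := exists_forall_le_of_projIcc_le h hf.continuousOn hproj
  refine ⟨⟨xs, hxs, hmin⟩, ?_⟩
  calc ⨅ x, f x = f xs := ciInf_eq_of_forall_ge_of_forall_gt_exists_lt hmin fun _ hw => ⟨xs, hw⟩
    _ = ⨅ x : Icc (q 0) (p 0), f x := (IsMinOn.iInf_eq hxs fun x _ => hmin x : _ = f xs).symm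
end
end

section
/- Let S ⊆ ℝ² be a finite set whose points have pairwise distinct y-coordinates, and let p ∈ S. Define the farthest region of the rightward halfline →p as F_p := { z ∈ ℝ² : for all q ∈ S, infDist(z, →q) ≤ infDist(z, →p) }. Then for every y₀ ∈ ℝ, the set { x ∈ ℝ : (x, y₀) ∈ F_p } is convex (i.e., it is an interval): the farthest-site Voronoi cell of →p intersects every horizontal line in a connected set. -/
open Metric Set

noncomputable section

lemma dist_pt_aux (x y : ℝ) (w : Pt) :
    dist (pt x y) w = Real.sqrt ((x - w 0)^2 + (y - w 1)^2) := by
  rw [EuclideanSpace.dist_eq]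
  congr 1
  have h0 : pt x y 0 = x := rfl
  have h1 : pt x y 1 = y := rfl
  simp [Fin.sum_univ_two, h0, h1, Real.dist_eq, sq_abs, sq]

lemma infDist_rightRay_aux (q : Pt) (x y : ℝ) :
    infDist (pt x y) (rightRay q) = Real.sqrt ((max (q 0 - x) 0)^2 + (y - q 1)^2) := by
  apply le_antisymm
  · have hmem : pt (max x (q 0)) (q 1) ∈ rightRay q := ⟨rfl, le_max_right _ _⟩
    have h := infDist_le_dist_of_mem (x := pt x y) hmem
    rw [dist_pt_aux] at h
    convert h using 3
    show max (q 0 - x) 0 ^ 2 = (x - pt (max x (q 0)) (q 1) 0)^2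
    have : pt (max x (q 0)) (q 1) 0 = max x (q 0) := rfl
    rw [this]
    rcases le_total x (q 0) with h | h
    · rw [max_eq_right h, max_eq_left (by linarith)]; ring
    · rw [max_eq_left h, max_eq_right (by linarith)]; ring
    all_goals rfl
  · rw [infDist_eq_iInf]
    have hne : (rightRay q).Nonempty := ⟨pt (q 0) (q 1), rfl, le_refl _⟩
    haveI : Nonempty (rightRay q) := hne.to_subtype
    apply le_ciInf
    intro ⟨w, hw⟩
    rw [dist_pt_aux]
    apply Real.sqrt_le_sqrt
    have h1 : (y - w 1)^2 = (y - q 1)^2 := by rw [hw.1]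
    have h2 : (max (q 0 - x) 0)^2 ≤ (x - w 0)^2 := by
      have hw0 := hw.2
      rcases le_total (q 0 - x) 0 with h | h
      · rw [max_eq_right h]; nlinarith [sq_nonneg (x - w 0)]
      · rw [max_eq_left h]; nlinarith
    linarith

lemma key_mono_aux (a b x x' : ℝ) (hx : x ≤ x') (hab : b ≤ a) :
    max (a - x') 0 ^ 2 - max (b - x') 0 ^ 2 ≤ max (a - x) 0 ^ 2 - max (b - x) 0 ^ 2 := by
  rcases le_total (a - x) 0 with h1 | h1 <;> rcases le_total (a - x') 0 with h2 | h2 <;>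
    rcases le_total (b - x) 0 with h3 | h3 <;> rcases le_total (b - x') 0 with h4 | h4 <;>
    simp only [max_eq_left, max_eq_right, sup_of_le_left, sup_of_le_right, h1, h2, h3, h4] <;>
    nlinarith

theorem stmt_11 (S : Finset Pt) (hdist : ∀ p ∈ S, ∀ q ∈ S, p 1 = q 1 → p = q)
    (p : Pt) (hp : p ∈ S) (y₀ : ℝ) :
    Convex ℝ {x : ℝ | ∀ q ∈ S,
      infDist (pt x y₀) (rightRay q) ≤ infDist (pt x y₀) (rightRay p)} := by
  rw [convex_iff_ordConnected]
  constructor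
  intro x₁ h₁ x₂ h₂ x hx q hq
  have h1q := h₁ q hq
  have h2q := h₂ q hq
  simp only [infDist_rightRay_aux] at h1q h2q ⊢
  have hnn : ∀ (t : ℝ), (0:ℝ) ≤ (max (p 0 - t) 0)^2 + (y₀ - p 1)^2 := by
    intro t; positivity
  rw [Real.sqrt_le_sqrt_iff (hnn _)] at h1q h2q ⊢
  rcases le_total (q 0) (p 0) with hqp | hqp
  · have := key_mono_aux (p 0) (q 0) x x₂ hx.2 hqp
    linarith
  · have := key_mono_aux (q 0) (p 0) x₁ x hx.1 hqp
    linarith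
end
end

section
/- Let α, β ∈ ℝ and let S, T ⊆ ℝ² be finite nonempty sets. Then: (i) the function t ↦ h_{←^α T}((t, αt + β)) is monotonically nondecreasing and t ↦ h_{→^α S}((t, αt + β)) is monotonically nonincreasing; (ii) there exists x* ∈ ℝ with h_{→^α S}((x*, αx* + β)) = h_{←^α T}((x*, αx* + β)); and (iii) for every such x*, the common value equals max_{(p,q) ∈ S × T} δ'_{pq}(α, β). -/
/-!
Every half-line `→^α p` is parallel to the line `ℓ = {(t, αt + β)}`. Shifting a point of `ℓ` and a
point of `→^α p` forward by the same multiple of `(1, α)` preserves their distance and keeps the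
second on the half-line, so `h_{→^α p}` is nonincreasing along `ℓ`; symmetrically `h_{←^α q}` is
nondecreasing. Both grow at least linearly at their far ends, so the continuous difference of the
two envelopes changes sign and the envelopes cross. At a crossing `x*` with common value `c`, every
pair has `δ'_{pq} ≤ max(h_{←^α q}, h_{→^α p})(x*) ≤ c`; for the pair attaining both maxima at `x*`,
monotonicity gives `max(h_{←^α q}, h_{→^α p}) ≥ c` on all of `ℓ`, left of `x*` through `p` and right
of it through `q`.
-/

open Metric Set

noncomputable section

/-- The leftward halfline of slope α at p: { p − t·(1, α) : t ≥ 0 }. -/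
def leftRayA (α : ℝ) (p : Pt) : Set Pt := {z : Pt | ∃ t : ℝ, 0 ≤ t ∧ z = p - t • pt 1 α}

/-- The rightward halfline of slope α at p: { p + t·(1, α) : t ≥ 0 }. -/
def rightRayA (α : ℝ) (p : Pt) : Set Pt := {z : Pt | ∃ t : ℝ, 0 ≤ t ∧ z = p + t • pt 1 α}

/-- h_{←^α p}(q): distance from q to the leftward halfline of slope α at p. -/
def hLA (α : ℝ) (p q : Pt) : ℝ := infDist q (leftRayA α p)

/-- h_{→^α p}(q): distance from q to the rightward halfline of slope α at p. -/
def hRA (α : ℝ) (p q : Pt) : ℝ := infDist q (rightRayA α p)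

/-- h_{←^α T}(q) = max_{p ∈ T} h_{←^α p}(q). -/
def hLAS (α : ℝ) (T : Finset Pt) (hT : T.Nonempty) (q : Pt) : ℝ :=
  T.sup' hT fun p => hLA α p q

/-- h_{→^α T}(q) = max_{p ∈ T} h_{→^α p}(q). -/
def hRAS (α : ℝ) (T : Finset Pt) (hT : T.Nonempty) (q : Pt) : ℝ :=
  T.sup' hT fun p => hRA α p q

/-- δ_{pq}(α, β) = inf_x max{‖(x, αx+β) − p‖, ‖(x, αx+β) − q‖}. -/
def deltaA (p q : Pt) (α β : ℝ) : ℝ :=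
  ⨅ x : ℝ, max ‖pt x (α * x + β) - p‖ ‖pt x (α * x + β) - q‖

/-- δ'_{pq}(α, β) = inf_x max{h_{←^α q}((x, αx+β)), h_{→^α p}((x, αx+β))}. -/
def deltaA' (p q : Pt) (α β : ℝ) : ℝ :=
  ⨅ x : ℝ, max (hLA α q (pt x (α * x + β))) (hRA α p (pt x (α * x + β)))

open Filter

section HalfLine

variable {E : Type*} [NormedAddCommGroup E] [NormedSpace ℝ E]

def halfLine (p v : E) : Set E := {z | ∃ s : ℝ, 0 ≤ s ∧ z = p + s • v}

lemma halfLine_nonempty (p v : E) : (halfLine p v).Nonempty :=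
  ⟨p, 0, le_rfl, by simp⟩

lemma antitone_infDist_halfLine (z p v : E) :
    Antitone fun t : ℝ => infDist (z + t • v) (halfLine p v) := by
  intro t t' htt'
  refine (le_infDist (halfLine_nonempty p v)).2 ?_
  rintro _ ⟨s, hs, rfl⟩
  calc infDist (z + t' • v) (halfLine p v)
      ≤ dist (z + t' • v) (p + (s + (t' - t)) • v) :=
        infDist_le_dist_of_mem ⟨_, by linarith, rfl⟩
    _ = dist (z + t • v) (p + s • v) := by
        rw [dist_eq_norm, dist_eq_norm]
        congr 1
        module

lemma monotone_infDist_halfLine_neg (z p v : E) :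
    Monotone fun t : ℝ => infDist (z + t • v) (halfLine p (-v)) := fun t t' htt' => by
  simpa only [neg_smul_neg] using antitone_infDist_halfLine z p (-v) (neg_le_neg htt')

lemma neg_mul_norm_sub_dist_le_infDist_halfLine (z p v : E) (t : ℝ) :
    -t * ‖v‖ - dist z p ≤ infDist (z + t • v) (halfLine p v) := by
  refine (le_infDist (halfLine_nonempty p v)).2 ?_
  rintro _ ⟨s, hs, rfl⟩
  have hdiff : (z + t • v) - (p + s • v) = (z - p) - (s - t) • v := by module
  calc -t * ‖v‖ - dist z p
      ≤ |s - t| * ‖v‖ - ‖z - p‖ := by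
        rw [dist_eq_norm]
        gcongr
        exact (neg_le_sub_iff_le_add.2 (by linarith)).trans (le_abs_self _)
    _ = ‖(s - t) • v‖ - ‖z - p‖ := by rw [norm_smul, Real.norm_eq_abs]
    _ ≤ ‖(z + t • v) - (p + s • v)‖ := by
        rw [hdiff, norm_sub_rev (z - p)]
        exact norm_sub_norm_le _ _
    _ = dist (z + t • v) (p + s • v) := (dist_eq_norm _ _).symm

lemma tendsto_infDist_halfLine_atBot (z p : E) {v : E} (hv : v ≠ 0) :
    Tendsto (fun t : ℝ => infDist (z + t • v) (halfLine p v)) atBot atTop := by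
  refine tendsto_atTop_mono (neg_mul_norm_sub_dist_le_infDist_halfLine z p v) ?_
  exact tendsto_atTop_add_const_right _ _
    (tendsto_neg_atBot_atTop.atTop_mul_const (norm_pos_iff.2 hv))

lemma tendsto_infDist_halfLine_neg_atTop (z p : E) {v : E} (hv : v ≠ 0) :
    Tendsto (fun t : ℝ => infDist (z + t • v) (halfLine p (-v))) atTop atTop := by
  simpa only [Function.comp_def, neg_smul_neg] using
    (tendsto_infDist_halfLine_atBot z p (neg_ne_zero.2 hv)).comp tendsto_neg_atTop_atBot

end HalfLine

section RealFunctions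

lemma exists_eq_of_antitone_of_monotone {f g : ℝ → ℝ} (hfc : Continuous f) (hgc : Continuous g)
    (hf : Antitone f) (hg : Monotone g) (hf_bot : Tendsto f atBot atTop)
    (hg_top : Tendsto g atTop atTop) : ∃ x, f x = g x := by
  have h_bot : Tendsto (fun x => f x - g x) atBot atTop := by
    refine tendsto_atTop_mono' _
      (eventually_le_atBot 0 |>.mono fun x hx => sub_le_sub_left (hg hx) _) ?_
    simpa only [sub_eq_add_neg] using tendsto_atTop_add_const_right _ (-g 0) hf_bot
  have h_top : Tendsto (fun x => f x - g x) atTop atBot := by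
    refine tendsto_atBot_mono' _
      (eventually_ge_atTop 0 |>.mono fun x hx => sub_le_sub_right (hf hx) _) ?_
    simpa only [sub_eq_add_neg, Function.comp_def] using
      tendsto_atBot_add_const_left _ (f 0) (tendsto_neg_atTop_atBot.comp hg_top)
  obtain ⟨x, hx⟩ := (hfc.sub hgc).surjective' h_bot h_top 0
  exact ⟨x, sub_eq_zero.1 hx⟩

lemma le_max_of_antitone_of_monotone {f g : ℝ → ℝ} (hf : Antitone f) (hg : Monotone g)
    {x₀ c : ℝ} (hfc : c ≤ f x₀) (hgc : c ≤ g x₀) (x : ℝ) : c ≤ max (g x) (f x) := by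
  rcases le_total x x₀ with hx | hx
  · exact (hfc.trans (hf hx)).trans (le_max_right _ _)
  · exact (hgc.trans (hg hx)).trans (le_max_left _ _)

lemma iInf_max_le_of_antitone_of_monotone {f g : ℝ → ℝ} (hf : Antitone f) (hg : Monotone g)
    (x₀ : ℝ) : ⨅ x, max (g x) (f x) ≤ max (g x₀) (f x₀) :=
  ciInf_le ⟨min (f 0) (g 0), by
    rintro _ ⟨x, rfl⟩
    exact le_max_of_antitone_of_monotone hf hg (min_le_left _ _) (min_le_right _ _) x⟩ x₀

lemma sup'_iInf_max_eq_of_sup'_eq {ι κ : Type*} {S : Finset ι} {T : Finset κ} (hS : S.Nonempty)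
    (hT : T.Nonempty) {F : ι → ℝ → ℝ} {G : κ → ℝ → ℝ} (hF : ∀ i, Antitone (F i))
    (hG : ∀ j, Monotone (G j)) {x₀ : ℝ} (h : S.sup' hS (F · x₀) = T.sup' hT (G · x₀)) :
    (S ×ˢ T).sup' (hS.product hT) (fun ij => ⨅ x, max (G ij.2 x) (F ij.1 x)) =
      S.sup' hS (F · x₀) := by
  apply le_antisymm
  · refine Finset.sup'_le _ _ fun ij hij => ?_
    obtain ⟨hi, hj⟩ := Finset.mem_product.1 hij
    refine (iInf_max_le_of_antitone_of_monotone (hF ij.1) (hG ij.2) x₀).trans (max_le ?_ ?_)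
    · exact h ▸ Finset.le_sup' (G · x₀) hj
    · exact Finset.le_sup' (F · x₀) hi
  · obtain ⟨i, hi, hFi⟩ := Finset.exists_mem_eq_sup' hS (F · x₀)
    obtain ⟨j, hj, hGj⟩ := Finset.exists_mem_eq_sup' hT (G · x₀)
    refine Finset.le_sup'_of_le _ (Finset.mk_mem_product hi hj) ?_
    exact le_ciInf (le_max_of_antitone_of_monotone (hF i) (hG j) hFi.le (h.trans hGj).le)

end RealFunctions

section Plane

lemma pt_line (α β t : ℝ) : pt t (α * t + β) = pt 0 β + t • pt 1 α := by
  ext i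
  fin_cases i <;> simp [pt]
  ring

lemma pt_one_ne_zero (α : ℝ) : pt 1 α ≠ 0 := fun h => by
  simpa [pt] using congrArg (· 0) h

lemma rightRayA_eq_halfLine (α : ℝ) (p : Pt) : rightRayA α p = halfLine p (pt 1 α) := rfl

lemma leftRayA_eq_halfLine (α : ℝ) (p : Pt) : leftRayA α p = halfLine p (-pt 1 α) := by
  simp only [leftRayA, halfLine, smul_neg, sub_eq_add_neg]

variable (α β : ℝ)

lemma monotone_hLA_line (p : Pt) : Monotone fun t => hLA α p (pt t (α * t + β)) := by
  simpa only [hLA, pt_line, leftRayA_eq_halfLine] using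
    monotone_infDist_halfLine_neg (pt 0 β) p (pt 1 α)

lemma antitone_hRA_line (p : Pt) : Antitone fun t => hRA α p (pt t (α * t + β)) := by
  simpa only [hRA, pt_line, rightRayA_eq_halfLine] using
    antitone_infDist_halfLine (pt 0 β) p (pt 1 α)

lemma tendsto_hLA_line_atTop (p : Pt) :
    Tendsto (fun t => hLA α p (pt t (α * t + β))) atTop atTop := by
  simpa only [hLA, pt_line, leftRayA_eq_halfLine] using
    tendsto_infDist_halfLine_neg_atTop (pt 0 β) p (pt_one_ne_zero α)

lemma tendsto_hRA_line_atBot (p : Pt) :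
    Tendsto (fun t => hRA α p (pt t (α * t + β))) atBot atTop := by
  simpa only [hRA, pt_line, rightRayA_eq_halfLine] using
    tendsto_infDist_halfLine_atBot (pt 0 β) p (pt_one_ne_zero α)

lemma continuous_line : Continuous fun t : ℝ => pt t (α * t + β) := by
  simp only [pt_line]
  fun_prop

lemma monotone_hLAS_line (T : Finset Pt) (hT : T.Nonempty) :
    Monotone fun t => hLAS α T hT (pt t (α * t + β)) := fun _ _ hst =>
  Finset.sup'_mono_fun fun p _ => monotone_hLA_line α β p hst

lemma antitone_hRAS_line (S : Finset Pt) (hS : S.Nonempty) :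
    Antitone fun t => hRAS α S hS (pt t (α * t + β)) := fun _ _ hst =>
  Finset.sup'_mono_fun fun p _ => antitone_hRA_line α β p hst

lemma continuous_hLAS_line (T : Finset Pt) (hT : T.Nonempty) :
    Continuous fun t => hLAS α T hT (pt t (α * t + β)) :=
  Continuous.finset_sup'_apply hT fun _ _ => (continuous_infDist_pt _).comp (continuous_line α β)

lemma continuous_hRAS_line (S : Finset Pt) (hS : S.Nonempty) :
    Continuous fun t => hRAS α S hS (pt t (α * t + β)) :=
  Continuous.finset_sup'_apply hS fun _ _ => (continuous_infDist_pt _).comp (continuous_line α β)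

lemma tendsto_hLAS_line_atTop (T : Finset Pt) (hT : T.Nonempty) :
    Tendsto (fun t => hLAS α T hT (pt t (α * t + β))) atTop atTop :=
  let ⟨_, hq⟩ := hT
  tendsto_atTop_mono (fun _ => Finset.le_sup' _ hq) (tendsto_hLA_line_atTop α β _)

lemma tendsto_hRAS_line_atBot (S : Finset Pt) (hS : S.Nonempty) :
    Tendsto (fun t => hRAS α S hS (pt t (α * t + β))) atBot atTop :=
  let ⟨_, hp⟩ := hS
  tendsto_atTop_mono (fun _ => Finset.le_sup' _ hp) (tendsto_hRA_line_atBot α β _)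

end Plane

theorem stmt_15 (α β : ℝ) (S T : Finset Pt) (hS : S.Nonempty) (hT : T.Nonempty) :
    (Monotone fun t : ℝ => hLAS α T hT (pt t (α * t + β))) ∧
    (Antitone fun t : ℝ => hRAS α S hS (pt t (α * t + β))) ∧
    (∃ xs : ℝ, hRAS α S hS (pt xs (α * xs + β)) = hLAS α T hT (pt xs (α * xs + β))) ∧
    (∀ xs : ℝ, hRAS α S hS (pt xs (α * xs + β)) = hLAS α T hT (pt xs (α * xs + β)) →
      hRAS α S hS (pt xs (α * xs + β)) =
        (S ×ˢ T).sup' (hS.product hT) fun pq => deltaA' pq.1 pq.2 α β) :=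
  ⟨monotone_hLAS_line α β T hT, antitone_hRAS_line α β S hS,
    exists_eq_of_antitone_of_monotone (continuous_hRAS_line α β S hS)
      (continuous_hLAS_line α β T hT) (antitone_hRAS_line α β S hS) (monotone_hLAS_line α β T hT)
      (tendsto_hRAS_line_atBot α β S hS) (tendsto_hLAS_line_atTop α β T hT),
    fun _ hcross => (sup'_iInf_max_eq_of_sup'_eq hS hT (antitone_hRA_line α β)
      (monotone_hLA_line α β) hcross).symm⟩
end
end
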